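/- arXiv:2001.07898 — 8 statements merged into one kernel-verified Lean document; each statement's English description precedes it below -/
import Mathlib

section
/- Let P and Q be coprime positive integers. Then the set C = {(⌊tP⌋, ⌊tQ⌋) : t ∈ [0,1)} ⊆ ℤ² has exactly P + Q − 1 elements. -/
/-!
A pair `(a, b)` equals `(⌊tP⌋, ⌊tQ⌋)` exactly when `t` lies in both `[a/P, (a+1)/P)` and
`[b/Q, (b+1)/Q)`; these intervals meet iff `-Q < aQ - bP < P`, and `t ∈ [0, 1)` amounts to
`0 ≤ a < P`. Since `P` and `Q` are coprime, `(a, b) ↦ aQ - bP` maps the strip `0 ≤ a < P`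
bijectively onto `ℤ`, so the pairs correspond to the `P + Q - 1` integers of `(-Q, P)`.
-/

open Set

theorem exists_floor_mul_eq_iff {x y : ℝ} (hx : 0 < x) (hy : 0 < y) (a b : ℤ) :
    (∃ t : ℝ, ⌊t * x⌋ = a ∧ ⌊t * y⌋ = b) ↔ a * y < (b + 1) * x ∧ b * x < (a + 1) * y := by
  have floor_eq_iff_mem {z : ℝ} (hz : 0 < z) (t : ℝ) (c : ℤ) :
      ⌊t * z⌋ = c ↔ t ∈ Ico (c / z) ((c + 1) / z) := by
    rw [Int.floor_eq_iff, mem_Ico, div_le_iff₀ hz, lt_div_iff₀ hz]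
  simp_rw [floor_eq_iff_mem hx, floor_eq_iff_mem hy]
  change (Ico _ _ ∩ Ico _ _).Nonempty ↔ _
  rw [Ico_inter_Ico, nonempty_Ico, max_lt_iff, lt_min_iff, lt_min_iff,
    div_lt_div_iff_of_pos_right hx, div_lt_div_iff_of_pos_right hy,
    div_lt_div_iff₀ hx hy, div_lt_div_iff₀ hy hx]
  constructor
  · rintro ⟨⟨-, h₁⟩, h₂, -⟩
    exact ⟨h₁, h₂⟩
  · rintro ⟨h₁, h₂⟩
    exact ⟨⟨by linarith, h₁⟩, h₂, by linarith⟩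

theorem floor_mul_natCast_mem_Ico_iff {n : ℕ} (hn : 0 < n) (t : ℝ) :
    ⌊t * n⌋ ∈ Ico (0 : ℤ) n ↔ t ∈ Ico 0 1 := by
  have hn' : (0 : ℝ) < n := by exact_mod_cast hn
  rw [mem_Ico, mem_Ico, Int.floor_nonneg, Int.floor_lt, Int.cast_natCast,
    mul_nonneg_iff_of_pos_right hn', mul_lt_iff_lt_one_left hn']

theorem bijOn_mul_sub_mul {P Q : ℤ} (hP : 0 < P) (hPQ : IsCoprime P Q) :
    BijOn (fun p : ℤ × ℤ => p.1 * Q - p.2 * P) (Ico 0 P ×ˢ univ) univ := by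
  refine ⟨fun _ _ => mem_univ _, ?inj, ?surj⟩
  case inj =>
    rintro ⟨a, b⟩ ⟨⟨ha₀, haP⟩, -⟩ ⟨a', b'⟩ ⟨⟨ha₀', haP'⟩, -⟩ h
    simp only at h
    have hdvd : P ∣ a - a' := hPQ.dvd_of_dvd_mul_right ⟨b - b', by linarith⟩
    obtain rfl : a = a' := by
      have := Int.eq_zero_of_abs_lt_dvd hdvd (abs_sub_lt_iff.mpr ⟨by linarith, by linarith⟩)
      linarith
    obtain rfl : b = b' := mul_right_cancel₀ hP.ne' (by linarith)
    rfl
  case surj =>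
    intro v _
    obtain ⟨u, w, huw⟩ := hPQ.symm
    -- `a = vu mod P` solves `aQ ≡ v (mod P)` because `uQ ≡ 1 (mod P)`
    refine ⟨(v * u % P, -(v * w) - v * u / P * Q),
      ⟨⟨Int.emod_nonneg _ hP.ne', Int.emod_lt_of_pos _ hP⟩, mem_univ _⟩, ?_⟩
    simp only
    rw [Int.emod_def]
    linear_combination v * huw

theorem ncard_inter_preimage_of_bijOn {α β : Type*} {f : α → β} {s : Set α}
    (hf : BijOn f s univ) (T : Set β) : (s ∩ f ⁻¹' T).ncard = T.ncard := by
  rw [← (hf.injOn.mono inter_subset_left).ncard_image, image_inter_preimage, hf.image_eq,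
    univ_inter]

theorem floor_pair_set_eq {P Q : ℕ} (hP : 0 < P) (hQ : 0 < Q) :
    {p : ℤ × ℤ | ∃ t : ℝ, 0 ≤ t ∧ t < 1 ∧ p = (⌊t * P⌋, ⌊t * Q⌋)}
      = Ico 0 (P : ℤ) ×ˢ univ ∩ (fun p : ℤ × ℤ => p.1 * Q - p.2 * P) ⁻¹' Ioo (-(Q : ℤ)) P := by
  ext ⟨a, b⟩
  have hoverlap : (∃ t : ℝ, ⌊t * P⌋ = a ∧ ⌊t * Q⌋ = b) ↔ a * Q - b * P ∈ Ioo (-(Q : ℤ)) P := by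
    rw [exists_floor_mul_eq_iff (Nat.cast_pos.mpr hP) (Nat.cast_pos.mpr hQ), mem_Ioo]
    norm_cast
    constructor <;> rintro ⟨h₁, h₂⟩ <;> constructor <;> linarith
  simp only [mem_ofPred_eq, mem_inter_iff, mem_prod, mem_univ, and_true, mem_preimage,
    ← hoverlap, Prod.mk.injEq]
  constructor
  · rintro ⟨t, ht₀, ht₁, rfl, rfl⟩
    exact ⟨(floor_mul_natCast_mem_Ico_iff hP t).mpr ⟨ht₀, ht₁⟩, t, rfl, rfl⟩
  · rintro ⟨ha, t, rfl, rfl⟩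
    obtain ⟨ht₀, ht₁⟩ := (floor_mul_natCast_mem_Ico_iff hP t).mp ha
    exact ⟨t, ht₀, ht₁, rfl, rfl⟩

theorem card_floor_set (P Q : ℕ) (hP : 0 < P) (hQ : 0 < Q)
    (hcop : Nat.Coprime P Q) :
    ({p : ℤ × ℤ | ∃ t : ℝ, 0 ≤ t ∧ t < 1 ∧ p = (⌊t * P⌋, ⌊t * Q⌋)}).ncard
      = P + Q - 1 := by
  have hbij := bijOn_mul_sub_mul (Int.natCast_pos.mpr hP) (Nat.isCoprime_iff_coprime.mpr hcop)
  rw [floor_pair_set_eq hP hQ, ncard_inter_preimage_of_bijOn hbij, ← Finset.coe_Ioo,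
    ncard_coe_finset, Int.card_Ioo]
  omega
end

section
/- Let P and Q be coprime positive integers. If (i,j) ∈ C = {(⌊tP⌋, ⌊tQ⌋) : t ∈ [0,1)} and (i,j) ≠ (P−1, Q−1), then (i+1,j) ∈ C or (i,j+1) ∈ C. -/
theorem staircase_step (P Q : ℕ) (hP : 0 < P) (hQ : 0 < Q)
    (hcop : Nat.Coprime P Q) (i j : ℤ)
    (hij : (i, j) ∈ {p : ℤ × ℤ | ∃ t : ℝ, 0 ≤ t ∧ t < 1 ∧ p = (⌊t * P⌋, ⌊t * Q⌋)})
    (hne : (i, j) ≠ ((P : ℤ) - 1, (Q : ℤ) - 1)) :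
    (i + 1, j) ∈ {p : ℤ × ℤ | ∃ t : ℝ, 0 ≤ t ∧ t < 1 ∧ p = (⌊t * P⌋, ⌊t * Q⌋)} ∨
    (i, j + 1) ∈ {p : ℤ × ℤ | ∃ t : ℝ, 0 ≤ t ∧ t < 1 ∧ p = (⌊t * P⌋, ⌊t * Q⌋)} := by
  obtain ⟨t, ht0, ht1, heq⟩ := hij
  rw [Prod.ext_iff] at heq
  obtain ⟨hi, hj⟩ := heq
  simp only at hi hj
  have hPR : (0:ℝ) < P := by exact_mod_cast hP
  have hQR : (0:ℝ) < Q := by exact_mod_cast hQ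
  have hi0 : 0 ≤ i := hi ▸ Int.floor_nonneg.2 (by positivity)
  have hj0 : 0 ≤ j := hj ▸ Int.floor_nonneg.2 (by positivity)
  have hiP : i < P := by
    rw [hi]; exact Int.floor_lt.2 (by push_cast; nlinarith)
  have hjQ : j < Q := by
    rw [hj]; exact Int.floor_lt.2 (by push_cast; nlinarith)
  have hti : (i:ℝ) ≤ t * P := hi ▸ Int.floor_le _
  have htj : (j:ℝ) ≤ t * Q := hj ▸ Int.floor_le _
  have hti' : t * P < (i:ℝ) + 1 := by
    rw [hi]; push_cast; exact Int.lt_floor_add_one _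
  have htj' : t * Q < (j:ℝ) + 1 := by
    rw [hj]; push_cast; exact Int.lt_floor_add_one _
  have hcopZ : IsCoprime (P:ℤ) (Q:ℤ) := by
    rw [Int.isCoprime_iff_gcd_eq_one, Int.gcd_natCast_natCast]; exact hcop
  rcases lt_trichotomy ((i+1)*Q) ((j+1)*P) with h | h | h
  · -- jump in i direction
    left
    have hiP' : i + 1 < P := by nlinarith
    refine ⟨((i:ℝ)+1)/P, by positivity, ?_, ?_⟩
    · rw [div_lt_one hPR]; exact_mod_cast hiP'
    · have h1 : ((i:ℝ)+1)/P * P = ((i+1 : ℤ) : ℝ) := by push_cast; field_simp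
      have h2 : ⌊((i:ℝ)+1)/P * Q⌋ = j := by
        rw [Int.floor_eq_iff]
        constructor
        · have htt : t ≤ ((i:ℝ)+1)/P := le_of_lt (by rw [lt_div_iff₀ hPR]; exact hti')
          calc (j:ℝ) ≤ t * Q := htj
            _ ≤ ((i:ℝ)+1)/P * Q := by nlinarith
        · rw [div_mul_eq_mul_div, div_lt_iff₀ hPR]
          have : ((i:ℝ)+1) * Q < ((j:ℝ)+1) * P := by exact_mod_cast h
          linarith
      rw [Prod.ext_iff]
      simp only
      rw [h1, Int.floor_intCast, h2]
      exact ⟨rfl, rfl⟩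
  · -- equality: contradiction with hne
    exfalso
    have hdvd : (P:ℤ) ∣ (i+1) * Q := ⟨j+1, by rw [h]; ring⟩
    have hdvd2 : (P:ℤ) ∣ i + 1 := hcopZ.dvd_of_dvd_mul_right hdvd
    have hle : (P:ℤ) ≤ i + 1 := Int.le_of_dvd (by omega) hdvd2
    have hiPe : i + 1 = P := by omega
    have hjQe : j + 1 = Q := by
      have h' := h
      rw [hiPe] at h'
      have hP0 : (P:ℤ) ≠ 0 := by exact_mod_cast hP.ne'
      have := mul_right_cancel₀ hP0 (by linarith : (Q:ℤ) * P = (j+1) * P)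
      omega
    exact hne (by rw [Prod.ext_iff]; constructor <;> simp <;> omega)
  · -- jump in j direction
    right
    have hjQ' : j + 1 < Q := by nlinarith
    refine ⟨((j:ℝ)+1)/Q, by positivity, ?_, ?_⟩
    · rw [div_lt_one hQR]; exact_mod_cast hjQ'
    · have h1 : ((j:ℝ)+1)/Q * Q = ((j+1 : ℤ) : ℝ) := by push_cast; field_simp
      have h2 : ⌊((j:ℝ)+1)/Q * P⌋ = i := by
        rw [Int.floor_eq_iff]
        constructor
        · have htt : t ≤ ((j:ℝ)+1)/Q := le_of_lt (by rw [lt_div_iff₀ hQR]; exact htj')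
          calc (i:ℝ) ≤ t * P := hti
            _ ≤ ((j:ℝ)+1)/Q * P := by nlinarith
        · rw [div_mul_eq_mul_div, div_lt_iff₀ hQR]
          have : ((j:ℝ)+1) * P < ((i:ℝ)+1) * Q := by exact_mod_cast h
          linarith
      rw [Prod.ext_iff]
      simp only
      rw [h1, Int.floor_intCast, h2]
      exact ⟨rfl, rfl⟩
end

section
/- Let b ≥ 2 and let P, Q be positive integers coprime to each other and to b. For every (i,j) ∈ C = {(⌊tP⌋, ⌊tQ⌋) : t ∈ [0,1)} and every integer r with 0 ≤ r ≤ b−1, the pair (⌊(i+rP)/b⌋, ⌊(j+rQ)/b⌋) also lies in C. -/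
lemma floor_div_nat' (a : ℝ) (n : ℕ) (hn : 0 < n) : ⌊a / n⌋ = ⌊a⌋ / n := by
  rw [Int.floor_eq_iff]
  have hn' : (0:ℝ) < n := by exact_mod_cast hn
  constructor
  · rw [le_div_iff₀ hn']
    have h1 : (⌊a⌋ / (n:ℤ)) * n ≤ ⌊a⌋ := Int.ediv_mul_le _ (by exact_mod_cast hn.ne')
    calc ((⌊a⌋ / (n:ℤ) : ℤ) : ℝ) * n = (((⌊a⌋ / (n:ℤ)) * n : ℤ) : ℝ) := by push_cast; ring
      _ ≤ (⌊a⌋ : ℝ) := by exact_mod_cast h1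
      _ ≤ a := Int.floor_le a
  · rw [div_lt_iff₀ hn']
    have h2 : ⌊a⌋ < (⌊a⌋ / (n:ℤ) + 1) * n :=
      Int.lt_ediv_add_one_mul_self _ (by exact_mod_cast hn)
    calc a < (⌊a⌋ : ℝ) + 1 := Int.lt_floor_add_one a
      _ ≤ (((⌊a⌋ / (n:ℤ) + 1) * n : ℤ) : ℝ) := by exact_mod_cast h2
      _ = ((⌊a⌋ / (n:ℤ) : ℤ) + 1 : ℝ) * n := by push_cast; ring

theorem staircase_closed (b P Q : ℕ) (hb : 2 ≤ b) (hP : 0 < P) (hQ : 0 < Q)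
    (hPQ : Nat.Coprime P Q) (hPb : Nat.Coprime P b) (hQb : Nat.Coprime Q b)
    (i j : ℤ)
    (hij : (i, j) ∈ {p : ℤ × ℤ | ∃ t : ℝ, 0 ≤ t ∧ t < 1 ∧ p = (⌊t * P⌋, ⌊t * Q⌋)})
    (r : ℕ) (hr : r ≤ b - 1) :
    ((i + r * P) / b, (j + r * Q) / b) ∈
      {p : ℤ × ℤ | ∃ t : ℝ, 0 ≤ t ∧ t < 1 ∧ p = (⌊t * P⌋, ⌊t * Q⌋)} := by
  obtain ⟨t, ht0, ht1, hp⟩ := hij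
  have hi : i = ⌊t * P⌋ := by simpa using congrArg Prod.fst hp
  have hj : j = ⌊t * Q⌋ := by simpa using congrArg Prod.snd hp
  have hb0 : 0 < b := by omega
  have hbR : (0:ℝ) < b := by exact_mod_cast hb0
  refine ⟨(t + r) / b, by positivity, ?_, ?_⟩
  · rw [div_lt_one hbR]
    have : (r : ℝ) ≤ (b : ℝ) - 1 := by
      have : (r : ℝ) ≤ ((b - 1 : ℕ) : ℝ) := by exact_mod_cast hr
      rwa [Nat.cast_sub (by omega), Nat.cast_one] at this
    linarith
  · have key : ∀ (N : ℕ), ⌊(t + r) / b * N⌋ = (⌊t * N⌋ + r * N) / b := by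
      intro N
      have : (t + r) / b * N = (t * N + (r * N : ℤ)) / b := by push_cast; ring
      rw [this, floor_div_nat' _ _ hb0, Int.floor_add_intCast]
    simp only [Prod.mk.injEq, hi, hj, key, and_self]
end

section
/- Let b ≥ 2 and let g : ℕ → ℂ be strongly b-multiplicative with |g(n)| = 1 for all n. If g(ℓ) = g(1)^ℓ for all 0 ≤ ℓ ≤ b−1 and g(b−1) = 1, then g(n) is periodic; more precisely, g(n) = e(n·j₀/(b−1)) for some integer j₀, where e(x) = exp(2πix). -/
theorem periodic_type (b : ℕ) (hb : 2 ≤ b) (g : ℕ → ℂ)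
    (hmult : ∀ k a : ℕ, a < b → g (k * b + a) = g k * g a)
    (hmod : ∀ n, ‖g n‖ = 1)
    (h1 : ∀ ℓ : ℕ, ℓ ≤ b - 1 → g ℓ = (g 1) ^ ℓ)
    (h2 : g (b - 1) = 1) :
    ∃ j₀ : ℤ, ∀ n : ℕ, g n =
      Complex.exp (2 * Real.pi * Complex.I * ((n : ℂ) * j₀ / ((b : ℂ) - 1))) := by
  set c := g 1 with hc
  have hcm : c ^ (b - 1) = 1 := by rw [← h1 (b - 1) le_rfl]; exact h2
  have key : ∀ n, g n = c ^ n := by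
    intro n
    induction n using Nat.strong_induction_on with
    | _ n ih =>
      rcases lt_or_ge n b with h | h
      · exact h1 n (by omega)
      · have hb0 : 0 < b := by omega
        set k := n / b with hk
        set a := n % b with ha
        have hna : k * b + a = n := by
          rw [hk, ha, mul_comm]; exact Nat.div_add_mod n b
        have hklt : k < n := Nat.div_lt_self (by omega) hb
        have halt : a < n := lt_of_lt_of_le (Nat.mod_lt n hb0) h
        have hab : a < b := Nat.mod_lt n hb0
        have hgn : g n = g k * g a := by rw [← hna]; exact hmult k a hab
        have hexp : k * b + a = k + a + k * (b - 1) := by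
          obtain ⟨m, rfl⟩ : ∃ m, b = m + 1 := ⟨b - 1, by omega⟩
          simp [Nat.add_sub_cancel]; ring
        rw [hgn, ih k hklt, ih a halt, ← hna, hexp]
        simp [pow_add, pow_mul', hcm]
  have hc0 : c ≠ 0 := by
    intro h0
    have := hmod 1
    rw [← hc, h0] at this
    simp at this
  obtain ⟨w, hw⟩ : ∃ w, Complex.exp w = c := by
    have : c ∈ Set.range Complex.exp := by rw [Complex.range_exp]; simpa using hc0
    exact this
  have hwm : Complex.exp ((b - 1 : ℕ) * w) = 1 := by
    rw [Complex.exp_nat_mul, hw, hcm]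
  obtain ⟨j, hj⟩ := Complex.exp_eq_one_iff.1 hwm
  have hb1 : (b : ℂ) - 1 ≠ 0 := by
    intro h0
    have : (b : ℂ) = 1 := by linear_combination h0
    have : b = 1 := by exact_mod_cast this
    omega
  have hcast : ((b - 1 : ℕ) : ℂ) = (b : ℂ) - 1 := by
    push_cast [Nat.cast_sub (by omega : 1 ≤ b)]; ring
  have hj' : ((b : ℂ) - 1) * w = (j : ℂ) * (2 * Real.pi * Complex.I) := by
    rw [← hcast]; exact hj
  refine ⟨j, fun n => ?_⟩
  rw [key n, ← hw, ← Complex.exp_nat_mul]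
  congr 1
  field_simp
  linear_combination (n : ℂ) * hj'
end

section
/- Let b ≥ 2 and g : ℕ → ℂ strongly b-multiplicative with |g| = 1, satisfying g(b−1) = 1 and g(ℓ) = g(1)^ℓ for 0 ≤ ℓ ≤ b−1. Then g(n+b−1) = g(n)·g(1)^{b−1} for all n ≥ 0; in particular g is periodic with period dividing b−1. -/
theorem periodicity (b : ℕ) (hb : 2 ≤ b) (g : ℕ → ℂ)
    (hmult : ∀ k a : ℕ, a < b → g (k * b + a) = g k * g a)
    (hmod : ∀ n, ‖g n‖ = 1)
    (h2 : g (b - 1) = 1)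
    (h1 : ∀ ℓ : ℕ, ℓ ≤ b - 1 → g ℓ = (g 1) ^ ℓ) :
    (∀ n : ℕ, g (n + (b - 1)) = g n * (g 1) ^ (b - 1)) ∧
      Function.Periodic g (b - 1) := by
  have hg0 : g 0 = 1 := by
    have h := hmult 0 0 (by omega)
    simp only [Nat.zero_mul, Nat.add_zero] at h
    have hne : g 0 ≠ 0 := by
      intro h0
      have := hmod 0
      rw [h0] at this
      simp at this
    have : g 0 * 1 = g 0 * g 0 := by rw [mul_one]; exact h
    exact (mul_left_cancel₀ hne this).symm
  have hstep : ∀ n, g (n + 1) = g n * g 1 := by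
    intro n
    induction n using Nat.strong_induction_on with
    | _ n ih =>
      have hdm : n / b * b + n % b = n := by
        rw [Nat.mul_comm]; exact Nat.div_add_mod n b
      have hmb : n % b < b := Nat.mod_lt _ (by omega)
      rcases Nat.lt_or_ge (n % b) (b - 1) with hlt | hge
      · -- n % b < b - 1
        have e1 : n + 1 = n / b * b + (n % b + 1) := by omega
        conv_rhs => rw [← hdm]
        rw [e1, hmult _ _ (by omega), hmult _ _ hmb,
          h1 (n % b + 1) (by omega), h1 (n % b) (by omega), pow_succ, mul_assoc]
      · -- n % b = b - 1
        have heq : n % b = b - 1 := by omega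
        rcases Nat.eq_zero_or_pos (n / b) with h0 | hpos
        · rw [h0, Nat.zero_mul, Nat.zero_add] at hdm
          have hn : n = b - 1 := by omega
          have e1 : n + 1 = 1 * b + 0 := by omega
          rw [e1, hmult _ _ (by omega), hg0, hn, h2, mul_one, one_mul]
        · have hexp : (n / b + 1) * b = n / b * b + b := by ring
          have e1 : n + 1 = (n / b + 1) * b + 0 := by omega
          have hlt' : n / b < n := by
            have : n / b * b ≥ n / b * 2 := Nat.mul_le_mul_left _ hb
            omega
          conv_rhs => rw [← hdm]
          rw [e1, hmult _ _ (by omega), hg0, mul_one, ih _ hlt',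
            hmult _ _ hmb, heq, h2, mul_one]
  have hpow : ∀ n, g n = (g 1) ^ n := by
    intro n
    induction n with
    | zero => simpa using hg0
    | succ n ih => rw [hstep, ih, pow_succ]
  have hb1 : (g 1) ^ (b - 1) = 1 := by
    rw [← h1 (b - 1) le_rfl, h2]
  constructor
  · intro n
    rw [hpow (n + (b - 1)), hpow n, pow_add]
  · intro n
    rw [hpow (n + (b - 1)), hpow n, pow_add, hb1, mul_one]
end

section
/- Let b ≥ 2, let P, Q be positive integers coprime to b and to each other, and let g : ℕ → ℂ be strongly b-multiplicative with |g| = 1. Define F_λ^{i,j}(t) = b^{−λ} Σ_{0 ≤ u < b^λ} g(Pu+i)·conj(g(Qu+j))·e(−ut). Then for λ ≥ 1 and all real t, F_λ^{i,j}(t) = (1/b) Σ_{r=0}^{b−1} g((Pr+i) mod b)·conj(g((Qr+j) mod b))·e(−rt)·F_{λ−1}^{⌊(i+rP)/b⌋, ⌊(j+rQ)/b⌋}(bt). -/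
open Finset in
lemma sum_range_div_mod {M : Type*} [AddCommMonoid M] (m b : ℕ) (hb : 0 < b) (f : ℕ → M) :
    ∑ u ∈ range (m * b), f u = ∑ r ∈ range b, ∑ q ∈ range m, f (q * b + r) := by
  induction m with
  | zero => simp
  | succ n ih =>
    have hsplit : ∑ u ∈ range ((n + 1) * b), f u
        = ∑ u ∈ range (n * b), f u + ∑ r ∈ range b, f (n * b + r) := by
      have h1 : (n + 1) * b = n * b + b := by ring
      rw [h1, Finset.range_eq_Ico,
        ← Finset.sum_Ico_consecutive f (Nat.zero_le (n * b)) (Nat.le_add_right _ _),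
        Finset.sum_Ico_eq_sum_range, Finset.sum_Ico_eq_sum_range]
      simp
    rw [hsplit, ih, ← Finset.sum_add_distrib]
    exact Finset.sum_congr rfl fun r _ => (Finset.sum_range_succ _ n).symm

open Finset in
noncomputable def Fcoef (b P Q : ℕ) (g : ℕ → ℂ) (lam i j : ℕ) (t : ℝ) : ℂ :=
  (1 / (b : ℂ) ^ lam) * ∑ u ∈ range (b ^ lam),
    g (P * u + i) * star (g (Q * u + j)) *
      Complex.exp (2 * Real.pi * Complex.I * (-(u : ℂ) * t))

open Finset in
theorem fourier_recurrence (b P Q : ℕ) (hb : 2 ≤ b) (hP : 0 < P) (hQ : 0 < Q)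
    (hPQ : Nat.Coprime P Q) (hPb : Nat.Coprime P b) (hQb : Nat.Coprime Q b)
    (g : ℕ → ℂ)
    (hmult : ∀ k a : ℕ, a < b → g (k * b + a) = g k * g a)
    (hmod : ∀ n, ‖g n‖ = 1)
    (lam : ℕ) (hlam : 1 ≤ lam) (i j : ℕ) (hi : i ≤ P - 1) (hj : j ≤ Q - 1)
    (t : ℝ) :
    Fcoef b P Q g lam i j t =
      (1 / (b : ℂ)) * ∑ r ∈ range b,
        g ((P * r + i) % b) * star (g ((Q * r + j) % b)) *
          Complex.exp (2 * Real.pi * Complex.I * (-(r : ℂ) * t)) *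
          Fcoef b P Q g (lam - 1) ((i + r * P) / b) ((j + r * Q) / b) (b * t) := by
  have hb0 : 0 < b := by omega
  have hbC : (b : ℂ) ≠ 0 := Nat.cast_ne_zero.mpr (by omega)
  obtain ⟨L, rfl⟩ : ∃ L, lam = L + 1 := ⟨lam - 1, by omega⟩
  simp only [Nat.add_sub_cancel, Fcoef]
  rw [pow_succ, pow_succ, sum_range_div_mod _ _ hb0, Finset.mul_sum, Finset.mul_sum]
  apply Finset.sum_congr rfl
  intro r hr
  have key : ∀ q ∈ range (b ^ L),
      g (P * (q * b + r) + i) * star (g (Q * (q * b + r) + j)) *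
        Complex.exp (2 * Real.pi * Complex.I * (-((q * b + r : ℕ) : ℂ) * t)) =
      (g ((P * r + i) % b) * star (g ((Q * r + j) % b)) *
        Complex.exp (2 * Real.pi * Complex.I * (-(r : ℂ) * t))) *
      (g (P * q + (i + r * P) / b) * star (g (Q * q + (j + r * Q) / b)) *
        Complex.exp (2 * Real.pi * Complex.I * (-(q : ℂ) * ((b : ℝ) * t)))) := by
    intro q _
    have e1 : i + r * P = P * r + i := by ring
    have e2 : j + r * Q = Q * r + j := by ring
    have hg1 : g (P * (q * b + r) + i)
        = g (P * q + (P * r + i) / b) * g ((P * r + i) % b) := by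
      rw [← hmult _ _ (Nat.mod_lt _ hb0)]
      congr 1
      have h := Nat.div_add_mod (P * r + i) b
      calc P * (q * b + r) + i = P * q * b + (P * r + i) := by ring
        _ = P * q * b + (b * ((P * r + i) / b) + (P * r + i) % b) := by rw [h]
        _ = (P * q + (P * r + i) / b) * b + (P * r + i) % b := by ring
    have hg2 : g (Q * (q * b + r) + j)
        = g (Q * q + (Q * r + j) / b) * g ((Q * r + j) % b) := by
      rw [← hmult _ _ (Nat.mod_lt _ hb0)]
      congr 1
      have h := Nat.div_add_mod (Q * r + j) b
      calc Q * (q * b + r) + j = Q * q * b + (Q * r + j) := by ring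
        _ = Q * q * b + (b * ((Q * r + j) / b) + (Q * r + j) % b) := by rw [h]
        _ = (Q * q + (Q * r + j) / b) * b + (Q * r + j) % b := by ring
    have hexp : Complex.exp (2 * Real.pi * Complex.I * (-((q * b + r : ℕ) : ℂ) * t))
        = Complex.exp (2 * Real.pi * Complex.I * (-(r : ℂ) * t)) *
          Complex.exp (2 * Real.pi * Complex.I * (-(q : ℂ) * ((b : ℝ) * t))) := by
      rw [← Complex.exp_add]
      congr 1
      push_cast
      ring
    rw [e1, e2, hg1, hg2, hexp, star_mul]
    ring
  rw [Finset.sum_congr rfl key, ← Finset.mul_sum]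
  push_cast
  ring
end

section
/- Let b ≥ 2 and g : ℕ → ℂ strongly b-multiplicative with |g(n)| = 1 for all n. Suppose that for all ℓ with 1 ≤ ℓ ≤ b−1 we have g(ℓ) = g(ℓ−1)·g(1)·conj(g(b−1)). Then g(b−1) = 1 and g(ℓ) = g(1)^ℓ for all 0 ≤ ℓ ≤ b−1. -/
theorem recurrence_relation_values (b : ℕ) (hb : 2 ≤ b) (g : ℕ → ℂ)
    (hmult : ∀ k a : ℕ, a < b → g (k * b + a) = g k * g a)
    (hmod : ∀ n, ‖g n‖ = 1)
    (h : ∀ ℓ : ℕ, 1 ≤ ℓ → ℓ ≤ b - 1 →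
      g ℓ = g (ℓ - 1) * g 1 * star (g (b - 1))) :
    g (b - 1) = 1 ∧ ∀ ℓ : ℕ, ℓ ≤ b - 1 → g ℓ = (g 1) ^ ℓ := by
  have hne : ∀ n, g n ≠ 0 := by
    intro n hn
    have := hmod n
    rw [hn] at this
    simp at this
  have hg0 : g 0 = 1 := by
    have h0 : g 0 * g 0 = g 0 * 1 := by
      have := hmult 0 0 (by omega)
      simpa using this.symm
    exact mul_left_cancel₀ (hne 0) h0
  have h1b : 1 ≤ b - 1 := by omega
  have hstar : star (g (b - 1)) = 1 := by
    have := h 1 le_rfl h1b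
    simp [hg0] at this
    have h2 : g 1 * star (g (b - 1)) = g 1 * 1 := by
      rw [mul_one]; exact this.symm
    exact mul_left_cancel₀ (hne 1) h2
  have hgb : g (b - 1) = 1 := by
    have := congrArg star hstar
    simpa using this
  refine ⟨hgb, ?_⟩
  intro ℓ
  induction ℓ with
  | zero => intro _; simpa using hg0
  | succ n ih =>
    intro hn
    have := h (n + 1) (by omega) hn
    rw [hstar, mul_one] at this
    simp only [Nat.add_sub_cancel] at this
    rw [this, ih (by omega), pow_succ]
end

section
/- Let b ≥ 2, let P, Q be positive integers coprime to each other and to b with b < P < Q, and let C = {(⌊tP⌋, ⌊tQ⌋) : t ∈ [0,1)}. Then there exists an integer i₀ with 0 ≤ i₀ < b such that both (i₀, b−1) ∈ C and (i₀, b) ∈ C. -/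
/-!
Take `i₀ = ⌊bP/Q⌋`. The point `(⌊tP⌋, ⌊tQ⌋)` equals `(i, j)` exactly when `t` lies in both
`[i/P, (i+1)/P)` and `[j/Q, (j+1)/Q)`, so it suffices that these two intervals overlap. For
`j = b` this follows from `i₀ Q ≤ bP < (i₀ + 1) Q`; for `j = b - 1` one needs the strict
inequality `i₀ Q < bP`, which holds because `Q ∤ bP` by coprimality and `0 < b < Q`.
-/

def floorPath (P Q : ℝ) : Set (ℤ × ℤ) :=
  {p | ∃ t : ℝ, 0 ≤ t ∧ t < 1 ∧ p = (⌊t * P⌋, ⌊t * Q⌋)}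

theorem floor_mul_eq_of_div_le_of_lt_div {P t : ℝ} {i : ℤ} (hP : 0 < P)
    (hi : i / P ≤ t) (hi' : t < (i + 1) / P) : ⌊t * P⌋ = i := by
  rw [Int.floor_eq_iff]
  exact ⟨(div_le_iff₀ hP).1 hi, (lt_div_iff₀ hP).1 hi'⟩

theorem mem_floorPath_of_mul_lt {P Q : ℝ} {i j : ℤ} (hP : 0 < P) (hQ : 0 < Q)
    (hi : 0 ≤ i) (hiP : (i : ℝ) < P) (hjQ : (j : ℝ) < Q)
    (hij : i * Q < (j + 1) * P) (hji : j * P < (i + 1) * Q) :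
    (i, j) ∈ floorPath P Q := by
  have hiP' : (i : ℝ) / P < (j + 1) / Q := (div_lt_div_iff₀ hP hQ).2 hij
  have hjQ' : (j : ℝ) / Q < (i + 1) / P := (div_lt_div_iff₀ hQ hP).2 hji
  refine ⟨max (i / P) (j / Q), le_max_of_le_left (by positivity),
    max_lt ((div_lt_one hP).2 hiP) ((div_lt_one hQ).2 hjQ), ?_⟩
  rw [floor_mul_eq_of_div_le_of_lt_div hP (le_max_left _ _)
      (max_lt (div_lt_div_of_pos_right (lt_add_one _) hP) hjQ'),
    floor_mul_eq_of_div_le_of_lt_div hQ (le_max_right _ _)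
      (max_lt hiP' (div_lt_div_of_pos_right (lt_add_one _) hQ))]

theorem exists_double_point_general (b P Q : ℕ) (hb : 2 ≤ b)
    (hbP : b < P) (hPQ' : P < Q)
    (hPQ : Nat.Coprime P Q) :
    ∃ i₀ : ℕ, i₀ < b ∧
      ((i₀ : ℤ), (b : ℤ) - 1) ∈
        {p : ℤ × ℤ | ∃ t : ℝ, 0 ≤ t ∧ t < 1 ∧ p = (⌊t * P⌋, ⌊t * Q⌋)} ∧
      ((i₀ : ℤ), (b : ℤ)) ∈
        {p : ℤ × ℤ | ∃ t : ℝ, 0 ≤ t ∧ t < 1 ∧ p = (⌊t * P⌋, ⌊t * Q⌋)} := by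
  have hQ : 0 < Q := by omega
  set i₀ := b * P / Q
  have hle : i₀ * Q ≤ b * P := Nat.div_mul_le_self _ _
  have hlt : b * P < (i₀ + 1) * Q := by
    simpa only [mul_comm Q] using Nat.lt_mul_div_succ (b * P) hQ
  have hne : i₀ * Q ≠ b * P := fun h => by
    have hQb : Q ∣ b := hPQ.symm.dvd_of_dvd_mul_right ⟨i₀, by rw [← h, mul_comm]⟩
    exact absurd (Nat.le_of_dvd (by omega) hQb) (by omega)
  have hi₀b : i₀ < b := Nat.lt_of_mul_lt_mul_right
    (hle.trans_lt (Nat.mul_lt_mul_of_pos_left hPQ' (by omega)))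
  have hP0 : (0 : ℝ) < P := by exact_mod_cast (by omega : 0 < P)
  have hQ0 : (0 : ℝ) < Q := by exact_mod_cast hQ
  have hi₀P : (i₀ : ℝ) < P := by exact_mod_cast hi₀b.trans hbP
  have hbQ : (b : ℝ) < Q := by exact_mod_cast hbP.trans hPQ'
  have hltR : (i₀ : ℝ) * Q < b * P := by exact_mod_cast lt_of_le_of_ne hle hne
  have hlt_succR : (b : ℝ) * P < (i₀ + 1) * Q := by exact_mod_cast hlt
  refine ⟨i₀, hi₀b, ?_, ?_⟩ <;>
    refine mem_floorPath_of_mul_lt hP0 hQ0 (by positivity) (by exact_mod_cast hi₀P) ?_ ?_ ?_ <;>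
    push_cast <;> linarith

theorem exists_double_point (b P Q : ℕ) (hb : 2 ≤ b)
    (hbP : b < P) (hPQ' : P < Q)
    (hPQ : Nat.Coprime P Q) (hPb : Nat.Coprime P b) (hQb : Nat.Coprime Q b) :
    ∃ i₀ : ℕ, i₀ < b ∧
      ((i₀ : ℤ), (b : ℤ) - 1) ∈
        {p : ℤ × ℤ | ∃ t : ℝ, 0 ≤ t ∧ t < 1 ∧ p = (⌊t * P⌋, ⌊t * Q⌋)} ∧
      ((i₀ : ℤ), (b : ℤ)) ∈
        {p : ℤ × ℤ | ∃ t : ℝ, 0 ≤ t ∧ t < 1 ∧ p = (⌊t * P⌋, ⌊t * Q⌋)} :=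
  exists_double_point_general b P Q hb hbP hPQ' hPQ
end
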